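/- arXiv:1202.0964 — 3 statements merged into one kernel-verified Lean document; each statement's English description precedes it below -/
import Mathlib

section
/- If G is a simple graph of order n and 1 < k ≤ n, then q_k(G) ≤ n − 2. -/
/-!
Adding the complement, `Q(G) + Q(Gᶜ) = (n - 2) I + J` with `J` the all-ones matrix, and
`Q(Gᶜ) = B Bᵀ` (`B` the incidence matrix) is positive semidefinite. Hence the quadratic form of
`Q(G)` is at most `(n - 2) ‖x‖²` on the hyperplane `∑ x = 0`. Any two orthonormal eigenvectors
span a plane meeting this hyperplane, so at most one eigenvalue of `Q(G)` exceeds `n - 2`.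
-/

open Matrix SimpleGraph
open scoped Classical

/-- The `k`-th largest eigenvalue (1-indexed, counted with multiplicity) of a real
symmetric (Hermitian) matrix; junk value `0` if `M` is not Hermitian or `k` is out of range. -/
noncomputable def kthEig {V : Type*} [Fintype V] [DecidableEq V]
    (M : Matrix V V ℝ) (k : ℕ) : ℝ :=
  if hM : M.IsHermitian then
    if h : k - 1 < Fintype.card V then
      letI f : Fin (Fintype.card V) → ℝ := hM.eigenvalues ∘ (Fintype.equivFin V).symm
      (f ∘ Tuple.sort f) (Fin.rev ⟨k - 1, h⟩)
    else 0
  else 0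

/-- The signless Laplacian `Q(G) = D(G) + A(G)` of a simple graph `G`. -/
noncomputable def signlessLap {V : Type*} [Fintype V] [DecidableEq V]
    (G : SimpleGraph V) [DecidableRel G.Adj] : Matrix V V ℝ :=
  G.degMatrix ℝ + G.adjMatrix ℝ

/-- `qEig G k` is the `k`-th largest signless Laplacian eigenvalue `q_k(G)`. -/
noncomputable def qEig {V : Type*} [Fintype V] [DecidableEq V]
    (G : SimpleGraph V) [DecidableRel G.Adj] (k : ℕ) : ℝ :=
  kthEig (signlessLap G) k

/-- `c` is a bipartite connected component of `H`: the vertex set of the component splits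
into two disjoint classes `U`, `W` such that every edge of the component joins `U` and `W`. -/
def IsBipartiteComponent {V : Type*} (H : SimpleGraph V) (c : H.ConnectedComponent) : Prop :=
  ∃ U W : Set V, U ∪ W = c.supp ∧ Disjoint U W ∧
    ∀ ⦃u v : V⦄, u ∈ c.supp → H.Adj u v → (u ∈ U ∧ v ∈ W) ∨ (u ∈ W ∧ v ∈ U)

/-- `c` is a balanced bipartite connected component of `H`: bipartite with vertex classes
of equal size. -/
def IsBalancedBipartiteComponent {V : Type*} (H : SimpleGraph V)
    (c : H.ConnectedComponent) : Prop :=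
  ∃ U W : Set V, U ∪ W = c.supp ∧ Disjoint U W ∧ U.ncard = W.ncard ∧
    ∀ ⦃u v : V⦄, u ∈ c.supp → H.Adj u v → (u ∈ U ∧ v ∈ W) ∨ (u ∈ W ∧ v ∈ U)

/-- `G` is the complete multipartite graph whose parts are the fibers of `p`:
two vertices are adjacent iff they lie in different parts. -/
def IsCompleteMultipartiteWith {V ι : Type*} (G : SimpleGraph V) (p : V → ι) : Prop :=
  ∀ u v : V, G.Adj u v ↔ p u ≠ p v

section SignlessLaplacian

variable {V : Type*} [Fintype V] [DecidableEq V] (G : SimpleGraph V) [DecidableRel G.Adj]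

theorem signlessLap_eq_incMatrix_mul_transpose :
    signlessLap G = G.incMatrix ℝ * (G.incMatrix ℝ)ᵀ := by
  rw [incMatrix_mul_transpose]
  ext a b
  by_cases hab : a = b
  · subst hab
    simp [signlessLap, degMatrix]
  · simp [signlessLap, degMatrix, hab, adjMatrix_apply]

theorem signlessLap_posSemidef : (signlessLap G).PosSemidef := by
  rw [signlessLap_eq_incMatrix_mul_transpose, ← conjTranspose_eq_transpose_of_trivial]
  exact posSemidef_self_mul_conjTranspose _

theorem dotProduct_signlessLap_mulVec_nonneg (x : V → ℝ) : 0 ≤ x ⬝ᵥ (signlessLap G *ᵥ x) := by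
  simpa using (signlessLap_posSemidef G).dotProduct_mulVec_nonneg x

theorem degMatrix_add_degMatrix_compl :
    G.degMatrix ℝ + Gᶜ.degMatrix ℝ = ((Fintype.card V : ℝ) - 1) • 1 := by
  rw [degMatrix, degMatrix, diagonal_add, smul_one_eq_diagonal]
  congr 1
  ext v
  have hlt := G.degree_lt_card_verts v
  rw [degree_compl, Nat.cast_sub (by omega), Nat.cast_sub (by omega)]
  push_cast
  ring

theorem signlessLap_add_signlessLap_compl :
    signlessLap G + signlessLap Gᶜ = ((Fintype.card V : ℝ) - 2) • 1 + of 1 := by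
  have hadj : G.adjMatrix ℝ + Gᶜ.adjMatrix ℝ = of 1 - 1 := by
    rw [isCompl_compl.adjMatrix_add_adjMatrix_eq_adjMatrix_completeGraph ℝ,
      adjMatrix_completeGraph_eq_of_one_sub_one]
  calc signlessLap G + signlessLap Gᶜ
      = (G.degMatrix ℝ + Gᶜ.degMatrix ℝ) + (G.adjMatrix ℝ + Gᶜ.adjMatrix ℝ) := by
        simp only [signlessLap]; abel
    _ = _ := by
        rw [degMatrix_add_degMatrix_compl, hadj]
        module

theorem dotProduct_signlessLap_mulVec_le_of_sum_eq_zero (x : V → ℝ) (hx : ∑ v, x v = 0) :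
    x ⬝ᵥ (signlessLap G *ᵥ x) ≤ ((Fintype.card V : ℝ) - 2) * (x ⬝ᵥ x) := by
  have hJ : (of 1 : Matrix V V ℝ) *ᵥ x = 0 := by
    ext
    simp [mulVec, dotProduct, hx]
  have hsum := congrArg (fun M => x ⬝ᵥ (M *ᵥ x)) (signlessLap_add_signlessLap_compl G)
  simp only [add_mulVec, smul_mulVec, one_mulVec, hJ, add_zero, dotProduct_add,
    dotProduct_smul, smul_eq_mul] at hsum
  linarith [dotProduct_signlessLap_mulVec_nonneg Gᶜ x]

end SignlessLaplacian

namespace Matrix.IsHermitian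

variable {V : Type*} [Fintype V] [DecidableEq V] {M : Matrix V V ℝ}

theorem dotProduct_eigenvectorBasis (hM : M.IsHermitian) (i j : V) :
    ⇑(hM.eigenvectorBasis i) ⬝ᵥ ⇑(hM.eigenvectorBasis j) = if i = j then 1 else 0 := by
  rw [← orthonormal_iff_ite.mp hM.eigenvectorBasis.orthonormal i j,
    EuclideanSpace.inner_eq_star_dotProduct, star_trivial, dotProduct_comm]

theorem pairwise_eigenvalues_le_or_le (hM : M.IsHermitian) {w : V → ℝ} {c : ℝ}
    (hc : ∀ x, w ⬝ᵥ x = 0 → x ⬝ᵥ (M *ᵥ x) ≤ c * (x ⬝ᵥ x)) :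
    Pairwise fun i j => hM.eigenvalues i ≤ c ∨ hM.eigenvalues j ≤ c := by
  intro i j hij
  by_contra! hlarge
  have huu := hM.dotProduct_eigenvectorBasis i i
  have hvv := hM.dotProduct_eigenvectorBasis j j
  have huv := hM.dotProduct_eigenvectorBasis i j
  have hvu := hM.dotProduct_eigenvectorBasis j i
  have hMu := hM.mulVec_eigenvectorBasis i
  have hMv := hM.mulVec_eigenvectorBasis j
  simp only [if_pos, if_neg hij, if_neg hij.symm] at huu hvv huv hvu
  generalize ⇑(hM.eigenvectorBasis i) = u at *
  generalize ⇑(hM.eigenvectorBasis j) = v at *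
  obtain ⟨a, b, hab, hw⟩ : ∃ a b : ℝ, 0 < a ^ 2 + b ^ 2 ∧ a * (w ⬝ᵥ u) + b * (w ⬝ᵥ v) = 0 := by
    by_cases hu : w ⬝ᵥ u = 0
    · exact ⟨1, 0, by norm_num, by simp [hu]⟩
    · exact ⟨w ⬝ᵥ v, -(w ⬝ᵥ u), by nlinarith [sq_pos_of_ne_zero hu, sq_nonneg (w ⬝ᵥ v)], by ring⟩
  have hform := hc (a • u + b • v) (by simpa [dotProduct_add, dotProduct_smul] using hw)
  simp only [mulVec_add, mulVec_smul, hMu, hMv, dotProduct_add, add_dotProduct, dotProduct_smul,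
    smul_dotProduct, huu, hvv, huv, hvu, smul_eq_mul] at hform
  set m := min (hM.eigenvalues i) (hM.eigenvalues j)
  nlinarith [mul_pos hab (sub_pos.mpr (lt_min hlarge.1 hlarge.2)),
    mul_nonneg (sq_nonneg a) (sub_nonneg.mpr (min_le_left _ _ : m ≤ _)),
    mul_nonneg (sq_nonneg b) (sub_nonneg.mpr (min_le_right _ _ : m ≤ _))]

end Matrix.IsHermitian

theorem comp_sort_le_of_pairwise_le_or_le {α : Type*} [LinearOrder α] {N : ℕ} {f : Fin N → α}
    {c : α} (hf : Pairwise fun i j => f i ≤ c ∨ f j ≤ c) (p : Fin N) (hp : p.val + 2 ≤ N) :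
    (f ∘ Tuple.sort f) p ≤ c := by
  have hmono := Tuple.monotone_sort f
  let secondLargest : Fin N := ⟨N - 2, by omega⟩
  let largest : Fin N := ⟨N - 1, by omega⟩
  have hle : secondLargest ≤ largest := by simp only [Fin.le_def, secondLargest, largest]; omega
  have hne : Tuple.sort f secondLargest ≠ Tuple.sort f largest :=
    (Tuple.sort f).injective.ne (by simp only [ne_eq, Fin.ext_iff, secondLargest, largest]; omega)
  calc (f ∘ Tuple.sort f) p ≤ (f ∘ Tuple.sort f) secondLargest :=
        hmono (by simp only [Fin.le_def, secondLargest]; omega)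
    _ ≤ c := (hf hne).elim id fun h => (hmono hle).trans h

theorem kthEig_le_of_pairwise_eigenvalues_le_or_le {V : Type*} [Fintype V] [DecidableEq V]
    {M : Matrix V V ℝ} (hM : M.IsHermitian) {c : ℝ}
    (h : Pairwise fun i j => hM.eigenvalues i ≤ c ∨ hM.eigenvalues j ≤ c) {k : ℕ} (hk1 : 1 < k)
    (hkn : k ≤ Fintype.card V) : kthEig M k ≤ c := by
  rw [kthEig, dif_pos hM, dif_pos (by omega)]
  exact comp_sort_le_of_pairwise_le_or_le (h.comp_of_injective (Fintype.equivFin V).symm.injective)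
    _ (by simp only [Fin.val_rev]; omega)

/-- If `G` is a graph of order `n` and `1 < k ≤ n`, then `q_k(G) ≤ n - 2`. -/
theorem qk_le_n_sub_two (n k : ℕ) (hk1 : 1 < k) (hkn : k ≤ n)
    (G : SimpleGraph (Fin n)) [DecidableRel G.Adj] :
    qEig G k ≤ (n : ℝ) - 2 := by
  have hQ := (signlessLap_posSemidef G).isHermitian
  have hlarge := hQ.pairwise_eigenvalues_le_or_le (w := 1) fun x hx =>
    dotProduct_signlessLap_mulVec_le_of_sum_eq_zero G x (by rwa [one_dotProduct] at hx)
  simpa [qEig] using kthEig_le_of_pairwise_eigenvalues_le_or_le hQ hlarge hk1 (by simpa using hkn)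
end

section
/- Let r ≥ 2 and t ≥ 2, and let G = K_{1,t,…,t} be the complete (r+1)-partite graph with one part of size 1 and r parts of size t. Then the largest signless Laplacian eigenvalue of G is q₁(G) = (3tr − 2t + 1 + √(t²(r−2)² + 2t(3r−2) + 1)) / 2. -/
open Matrix SimpleGraph
open scoped Classical

/-!
The vector `x` equal to `q - (2(r-1)t + 1)` on the centre and to `1` on all other vertices is
constant on the parts, so `Q x` is computed from the part sizes alone: `Q x = q x` exactly when
`q` is a root of `q² - (3rt - 2t + 1) q + 2r(r-1)t²`, and for the larger root `x` is positive.
A positive eigenvector of a nonnegative symmetric matrix belongs to its largest eigenvalue: if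
`M y = μ y` and `i` maximises `|yᵢ| / xᵢ`, comparing row `i` of `M y` with that of `M x` gives
`|μ| ≤ q`.
-/

open Finset

namespace Matrix

variable {n : Type*} [Fintype n]

theorem abs_le_of_mulVec_le_of_pos {M : Matrix n n ℝ} (hM : ∀ i j, 0 ≤ M i j) {x : n → ℝ}
    (hx : ∀ i, 0 < x i) {q : ℝ} (hMx : ∀ i, (M *ᵥ x) i ≤ q * x i) {μ : ℝ} {y : n → ℝ}
    (hy : y ≠ 0) (hMy : M *ᵥ y = μ • y) : |μ| ≤ q := by
  obtain ⟨j, hj⟩ := Function.ne_iff.mp hy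
  obtain ⟨i, -, hi⟩ := exists_max_image univ (fun k => |y k| / x k) ⟨j, mem_univ j⟩
  set m := |y i| / x i
  have hm : 0 < m := (div_pos (abs_pos.mpr hj) (hx j)).trans_le (hi j (mem_univ j))
  have hyi : 0 < |y i| := (div_pos_iff_of_pos_right (hx i)).mp hm
  have hbound : ∀ k, |y k| ≤ m * x k := fun k => (div_le_iff₀ (hx k)).mp (hi k (mem_univ k))
  have key : |μ| * |y i| ≤ q * |y i| := calc
    |μ| * |y i| = |∑ k, M i k * y k| := by
      rw [← abs_mul, ← smul_eq_mul, ← Pi.smul_apply, ← hMy]; rfl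
    _ ≤ ∑ k, M i k * |y k| := by
      refine (abs_sum_le_sum_abs _ _).trans_eq (sum_congr rfl fun k _ => ?_)
      rw [abs_mul, abs_of_nonneg (hM i k)]
    _ ≤ ∑ k, M i k * (m * x k) :=
      sum_le_sum fun k _ => mul_le_mul_of_nonneg_left (hbound k) (hM i k)
    _ = m * (M *ᵥ x) i := by
      simp only [mulVec, dotProduct, mul_sum]
      exact sum_congr rfl fun k _ => by ring
    _ ≤ m * (q * x i) := mul_le_mul_of_nonneg_left (hMx i) hm.le
    _ = q * |y i| := by simp only [m]; field_simp [(hx i).ne']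
  exact le_of_mul_le_mul_right key hyi

end Matrix

section kthEig

variable {n : Type*} [Fintype n] [DecidableEq n]

theorem kthEig_one_eq_of_isGreatest {M : Matrix n n ℝ} (hM : M.IsHermitian) {q : ℝ}
    (hq : IsGreatest (Set.range hM.eigenvalues) q) : kthEig M 1 = q := by
  obtain ⟨⟨i₀, hi₀⟩, hub⟩ := hq
  have hcard : 1 - 1 < Fintype.card n := Fintype.card_pos_iff.mpr ⟨i₀⟩
  set f : Fin (Fintype.card n) → ℝ := hM.eigenvalues ∘ (Fintype.equivFin n).symm
  set σ := Tuple.sort f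
  rw [kthEig, dif_pos hM, dif_pos hcard]
  refine le_antisymm (hub ⟨_, rfl⟩) ?_
  have hq : q = (f ∘ σ) (σ⁻¹ (Fintype.equivFin n i₀)) := by
    simp [f, hi₀]
  rw [hq]
  refine Tuple.monotone_sort f (Fin.le_def.mpr ?_)
  rw [Fin.val_rev]
  have := (σ⁻¹ (Fintype.equivFin n i₀)).isLt
  simp only [Nat.sub_self]
  omega

theorem kthEig_one_eq_of_pos_eigenvector [Nonempty n] {M : Matrix n n ℝ} (hM : M.IsHermitian)
    (hM₀ : ∀ i j, 0 ≤ M i j) {x : n → ℝ} (hx : ∀ i, 0 < x i) {q : ℝ} (hMx : M *ᵥ x = q • x) :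
    kthEig M 1 = q := by
  refine kthEig_one_eq_of_isGreatest hM ⟨?_, ?_⟩
  · have hx₀ : x ≠ 0 := fun h => (hx (Classical.arbitrary n)).ne' (congrFun h _)
    have hq : Module.End.HasEigenvalue (toLin' M) q :=
      Module.End.hasEigenvalue_of_hasEigenvector
        ⟨Module.End.mem_eigenspace_iff.mpr (by simpa using hMx), hx₀⟩
    rw [← hM.spectrum_real_eq_range_eigenvalues, ← spectrum_toLin']
    exact hq.mem_spectrum
  · rintro _ ⟨j, rfl⟩
    refine (le_abs_self _).trans (Matrix.abs_le_of_mulVec_le_of_pos hM₀ hx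
      (fun i => (congrFun hMx i).le) ?_ (hM.mulVec_eigenvectorBasis j))
    exact fun h => hM.eigenvectorBasis.orthonormal.ne_zero j
      (by simpa using congrArg (WithLp.toLp 2) h)

end kthEig

namespace SimpleGraph

variable {V : Type*} [Fintype V] [DecidableEq V] (G : SimpleGraph V) [DecidableRel G.Adj]

theorem isHermitian_signlessLap : (signlessLap G).IsHermitian :=
  (G.isHermitian_degMatrix ℝ).add (G.isHermitian_adjMatrix ℝ)

theorem signlessLap_nonneg (u v : V) : 0 ≤ signlessLap G u v := by
  simp only [signlessLap, degMatrix, Matrix.add_apply, diagonal_apply, adjMatrix_apply]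
  split_ifs <;> positivity

theorem signlessLap_mulVec_apply (x : V → ℝ) (u : V) :
    (signlessLap G *ᵥ x) u = G.degree u * x u + ∑ v ∈ G.neighborFinset u, x v := by
  rw [signlessLap, add_mulVec, Pi.add_apply, degMatrix_mulVec_apply, adjMatrix_mulVec_apply]

end SimpleGraph

namespace IsCompleteMultipartiteWith

variable {V ι : Type*} [Fintype V] [DecidableEq ι] {G : SimpleGraph V}
  [DecidableRel G.Adj] {p : V → ι}

theorem neighborFinset_eq (hp : IsCompleteMultipartiteWith G p) (u : V) :
    G.neighborFinset u = ({v | p v ≠ p u} : Finset V) := by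
  ext v
  rw [SimpleGraph.mem_neighborFinset, hp, mem_filter, ne_comm]
  simp

theorem degree_add_card_part (hp : IsCompleteMultipartiteWith G p) (u : V) :
    G.degree u + #{v | p v = p u} = Fintype.card V := by
  rw [← G.card_neighborFinset_eq_degree, hp.neighborFinset_eq, add_comm,
    card_filter_add_card_filter_not, card_univ]

theorem signlessLap_mulVec_comp_apply [DecidableEq V] (hp : IsCompleteMultipartiteWith G p)
    (f : ι → ℝ) (u : V) :
    (signlessLap G *ᵥ (f ∘ p)) u =
      (Fintype.card V - 2 * #{v | p v = p u} : ℝ) * f (p u) + ∑ v, f (p v) := by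
  have hdeg : (G.degree u : ℝ) = Fintype.card V - #{v | p v = p u} := by
    rw [← hp.degree_add_card_part u]; push_cast; ring
  have hpart : ∑ v with p v = p u, f (p v) = #{v | p v = p u} * f (p u) := by
    rw [sum_congr rfl fun v hv => by rw [(mem_filter.mp hv).2], sum_const, nsmul_eq_mul]
  rw [SimpleGraph.signlessLap_mulVec_apply, hdeg, hp.neighborFinset_eq,
    ← sum_filter_add_sum_filter_not univ (fun v => p v = p u) (fun v => f (p v)), hpart]
  simp only [Function.comp_apply]
  ring

end IsCompleteMultipartiteWith

section K1tt

variable {r t : ℕ} {G : SimpleGraph (Fin (r * t + 1))} [DecidableRel G.Adj]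
  {p : Fin (r * t + 1) → Fin (r + 1)}

theorem signlessLap_mulVec_K1tt (hp : IsCompleteMultipartiteWith G p)
    (h0 : #{v | p v = 0} = 1) (hi : ∀ i, i ≠ 0 → #{v | p v = i} = t) {q : ℝ}
    (hq : q ^ 2 - (3 * r * t - 2 * t + 1) * q + 2 * r * (r - 1) * t ^ 2 = 0) :
    signlessLap G *ᵥ (fun v => if p v = 0 then q - (2 * (r - 1) * t + 1) else 1) =
      q • fun v => if p v = 0 then q - (2 * (r - 1) * t + 1) else 1 := by
  set x : Fin (r + 1) → ℝ := fun i => if i = 0 then q - (2 * (r - 1) * t + 1) else 1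
  change signlessLap G *ᵥ (x ∘ p) = q • (x ∘ p)
  have hrest : #{v | ¬p v = 0} = r * t := by
    have := card_filter_add_card_filter_not (s := univ) (fun v => p v = 0)
    rw [h0, card_univ, Fintype.card_fin] at this
    omega
  have hsum : ∑ v, x (p v) = q - (2 * (r - 1) * t + 1) + r * t := by
    simp only [x, sum_ite, sum_const, h0, hrest, nsmul_eq_mul]
    push_cast
    ring
  funext u
  rw [hp.signlessLap_mulVec_comp_apply, hsum, Fintype.card_fin, Pi.smul_apply, smul_eq_mul,
    Function.comp_apply]
  by_cases hu : p u = 0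
  · simp only [x, hu, h0, if_true]
    push_cast
    linear_combination -hq
  · simp only [x, hi _ hu, hu, if_false]
    push_cast
    ring

end K1tt

/-- Let `r, t ≥ 2` and let `G = K_{1,t,…,t}` be the complete `(r+1)`-partite graph with one
part of size `1` and `r` parts of size `t`. Then
`q₁(G) = (3tr - 2t + 1 + √(t²(r-2)² + 2t(3r-2) + 1)) / 2`. -/
theorem q1_of_K1tt (r t : ℕ) (hr : 2 ≤ r) (ht : 2 ≤ t)
    (G : SimpleGraph (Fin (r * t + 1))) [DecidableRel G.Adj]
    (p : Fin (r * t + 1) → Fin (r + 1))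
    (hp : IsCompleteMultipartiteWith G p)
    (h0 : {v | p v = 0}.ncard = 1)
    (hi : ∀ i : Fin (r + 1), i ≠ 0 → {v | p v = i}.ncard = t) :
    qEig G 1 = (3 * (t : ℝ) * r - 2 * t + 1 +
        Real.sqrt ((t : ℝ) ^ 2 * ((r : ℝ) - 2) ^ 2 + 2 * t * (3 * r - 2) + 1)) / 2 := by
  have hncard (i : Fin (r + 1)) : {v | p v = i}.ncard = #{v | p v = i} := by
    rw [Set.ncard_eq_toFinset_card', Set.toFinset_ofPred]
  have hr' : (2 : ℝ) ≤ r := by exact_mod_cast hr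
  have ht' : (2 : ℝ) ≤ t := by exact_mod_cast ht
  set s := Real.sqrt ((t : ℝ) ^ 2 * ((r : ℝ) - 2) ^ 2 + 2 * t * (3 * r - 2) + 1)
  have hs : s ^ 2 = (t : ℝ) ^ 2 * ((r : ℝ) - 2) ^ 2 + 2 * t * (3 * r - 2) + 1 :=
    Real.sq_sqrt (by nlinarith)
  have hgap : (t : ℝ) * (r - 2) + 1 < s :=
    Real.lt_sqrt_of_sq_lt (by nlinarith)
  set q := (3 * (t : ℝ) * r - 2 * t + 1 + s) / 2 with hq_def
  have hq : q ^ 2 - (3 * r * t - 2 * t + 1) * q + 2 * r * (r - 1) * t ^ 2 = 0 := by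
    linear_combination (1 / 4 : ℝ) * hs
  refine kthEig_one_eq_of_pos_eigenvector (isHermitian_signlessLap G) (signlessLap_nonneg G)
    (fun v => ?_) (signlessLap_mulVec_K1tt hp (hncard 0 ▸ h0)
      (fun i hi0 => hncard i ▸ hi i hi0) hq)
  split_ifs
  · rw [hq_def]; linarith
  · exact one_pos
end

section
/- Let r ≥ 2 and t ≥ 2 with t > 2 + 1/(r−1), and let G = K_{1,t,…,t} be the complete (r+1)-partite graph with one part of size 1 and r parts of size t. Then q₂(G) = (3tr − 2t + 1 − √(t²(r−2)² + 2t(3r−2) + 1)) / 2 > δ(G), where δ(G) = t(r−1) + 1 is the minimum degree of G. -/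
open Matrix SimpleGraph
open scoped Classical

/-!
The signless Laplacian `Q` of `K_{1,t,…,t}` has an explicit orthogonal eigenbasis. Vectors
supported on one part of size `t` with zero sum are eigenvectors for `rt + 1 - t` (the degree
there), giving multiplicity `r(t - 1)`; vectors vanishing at the centre, constant on each part of
size `t` and with zero total sum are eigenvectors for `rt + 1 - 2t`, multiplicity `r - 1`; and the
two vectors constant on the centre and on its complement have eigenvalues `q₊ > q₋`, the roots
of `x² - (3rt - 2t + 1)x + 2rt²(r - 1)`. Inside each eigenspace Helmert vectors make the basis
orthogonal, and eigenvectors for different eigenvalues of a symmetric matrix are orthogonal, so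
the basis is invertible and determines the characteristic polynomial. Finally
`t > 2 + 1/(r - 1)` is exactly the condition `q₋ > rt + 1 - t`, so `q₂ = q₋`, while
`δ = rt + 1 - t`.
-/

open Finset

noncomputable def helmert (m i : ℕ) : ℝ :=
  if i ≤ m then 1 else if i = m + 1 then -((m : ℝ) + 1) else 0

lemma helmert_self (m : ℕ) : helmert m m = 1 := if_pos le_rfl

lemma helmert_of_le {m i : ℕ} (h : i ≤ m) : helmert m i = 1 := if_pos h

lemma helmert_of_lt {m i : ℕ} (h : m + 1 < i) : helmert m i = 0 := by
  rw [helmert, if_neg (by omega), if_neg (by omega)]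

lemma sum_range_helmert {m n : ℕ} (h : m + 1 < n) : ∑ i ∈ range n, helmert m i = 0 := by
  induction n, h using Nat.le_induction with
  | base =>
    rw [sum_range_succ,
      sum_congr rfl fun i hi => helmert_of_le (Nat.lt_succ_iff.mp (mem_range.mp hi)), helmert,
      if_neg (by omega), if_pos rfl]
    simp
  | succ n hn ih => rw [sum_range_succ, ih, helmert_of_lt (by omega), add_zero]

lemma sum_helmert {m n : ℕ} (h : m + 1 < n) : ∑ i : Fin n, helmert m i = 0 := by
  rw [Fin.sum_univ_eq_sum_range (helmert m), sum_range_helmert h]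

lemma helmert_mul_helmert_of_lt {m l : ℕ} (hml : m < l) (i : ℕ) :
    helmert m i * helmert l i = helmert m i := by
  by_cases hi : i ≤ m + 1
  · rw [helmert_of_le (show i ≤ l by omega), mul_one]
  · rw [helmert_of_lt (by omega), zero_mul]

lemma sum_helmert_mul_helmert {m l n : ℕ} (hml : m ≠ l) (hm : m + 1 < n) (hl : l + 1 < n) :
    ∑ i : Fin n, helmert m i * helmert l i = 0 := by
  rcases hml.lt_or_gt with h | h
  · simp_rw [helmert_mul_helmert_of_lt h, sum_helmert hm]
  · simp_rw [mul_comm (helmert m _), helmert_mul_helmert_of_lt h, sum_helmert hl]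

namespace Matrix

theorem IsSymm.dotProduct_eq_zero_of_mulVec_eq_smul {K n : Type*} [Field K] [Fintype n]
    {M : Matrix n n K} (hM : M.IsSymm) {x y : n → K} {a b : K}
    (hx : M *ᵥ x = a • x) (hy : M *ᵥ y = b • y) (hab : a ≠ b) : x ⬝ᵥ y = 0 := by
  have h : a * (x ⬝ᵥ y) = b * (x ⬝ᵥ y) := by
    rw [← smul_eq_mul, ← smul_dotProduct, ← smul_eq_mul, ← dotProduct_smul, ← hx, ← hy,
      dotProduct_mulVec, ← mulVec_transpose, hM.eq]
  exact (mul_eq_mul_right_iff.mp h).resolve_left hab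

open Polynomial in
theorem charpoly_eq_prod_of_orthogonal_eigenvectors {K V ι : Type*} [Field K] [LinearOrder K]
    [IsStrictOrderedRing K] [Fintype V] [DecidableEq V] [Fintype ι]
    (hcard : Fintype.card ι = Fintype.card V) {M : Matrix V V K} (f : ι → V → K) (d : ι → K)
    (heig : ∀ i, M *ᵥ f i = d i • f i) (horth : Pairwise fun i j => f i ⬝ᵥ f j = 0)
    (hne : ∀ i, f i ≠ 0) : M.charpoly = ∏ i, (X - C (d i)) := by
  let σ := Fintype.equivOfCardEq hcard
  let P : Matrix V V K := of fun v u => f (σ.symm u) v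
  have hMP : M * P = P * diagonal (d ∘ σ.symm) := by
    ext v u
    have := congrFun (heig (σ.symm u)) v
    simp only [mulVec, dotProduct, Pi.smul_apply, smul_eq_mul] at this
    rw [mul_diagonal]
    simp [P, mul_apply, this, mul_comm]
  have hPP : Pᵀ * P = diagonal fun u => f (σ.symm u) ⬝ᵥ f (σ.symm u) := by
    ext u u'
    rcases eq_or_ne u u' with rfl | h
    · simp [P, mul_apply, dotProduct]
    · simpa [P, mul_apply, dotProduct, h] using horth (σ.symm.injective.ne h)
  have hP : IsUnit P.det := by
    have := congrArg det hPP
    rw [det_mul, det_transpose, det_diagonal] at this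
    refine isUnit_iff_ne_zero.mpr fun h0 => ?_
    rw [h0, mul_zero, eq_comm, prod_eq_zero_iff] at this
    obtain ⟨u, -, hu⟩ := this
    exact hne _ (dotProduct_self_eq_zero.mp hu)
  have hconj : M = P * diagonal (d ∘ σ.symm) * P⁻¹ := by
    rw [← hMP, Matrix.mul_assoc, mul_nonsing_inv _ hP, Matrix.mul_one]
  rw [hconj, ← (P.isUnit_iff_isUnit_det.mpr hP).unit_spec, charpoly_units_conj, charpoly_diagonal]
  exact Fintype.prod_equiv σ.symm _ _ fun _ => rfl

end Matrix

theorem Monotone.eq_of_card_lt_of_le {α : Type*} [LinearOrder α] {N : ℕ} {g : Fin N → α}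
    (hg : Monotone g) {k : ℕ} (hk : k - 1 < N) {q : α}
    (hlt : #{j | q < g j} < k) (hle : k ≤ #{j | q ≤ g j}) :
    g (Fin.rev ⟨k - 1, hk⟩) = q := by
  set m := Fin.rev ⟨k - 1, hk⟩
  have hm : (m : ℕ) = N - k := by simp [m, Fin.val_rev]; omega
  refine le_antisymm (not_lt.mp fun h => ?_) (not_lt.mp fun h => ?_)
  · have : Ici m ⊆ ({j | q < g j} : Finset _) := fun j hj =>
      mem_filter.mpr ⟨mem_univ _, h.trans_le (hg (mem_Ici.mp hj))⟩
    have := card_le_card this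
    rw [Fin.card_Ici] at this
    omega
  · have : ({j | q ≤ g j} : Finset _) ⊆ Ioi m := fun j hj =>
      mem_Ioi.mpr (lt_of_not_ge fun hjm => (mem_filter.mp hj).2.not_gt ((hg hjm).trans_lt h))
    have := card_le_card this
    rw [Fin.card_Ioi] at this
    omega

lemma card_filter_eq_of_map_eq {α β γ : Type*} [Fintype α] [Fintype β] {f : α → γ} {g : β → γ}
    (h : univ.val.map f = univ.val.map g) (P : γ → Prop) [DecidablePred P] :
    #{a | P (f a)} = #{b | P (g b)} := by
  simpa [Multiset.countP_map, Finset.card, Finset.filter] using congrArg (Multiset.countP P) h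

open Polynomial in
theorem kthEig_eq_of_charpoly_eq {V ι : Type*} [Fintype V] [DecidableEq V] [Fintype ι]
    {M : Matrix V V ℝ} (hM : M.IsHermitian) (d : ι → ℝ) (hchar : M.charpoly = ∏ i, (X - C (d i)))
    {k : ℕ} {q : ℝ} (hlt : #{i | q < d i} < k) (hle : k ≤ #{i | q ≤ d i}) :
    kthEig M k = q := by
  have hspec : univ.val.map hM.eigenvalues = univ.val.map d := by
    have := hM.roots_charpoly_eq_eigenvalues
    rw [hchar, prod_eq_multiset_prod, show univ.val.map (fun i => X - C (d i)) =
      (univ.val.map d).map (fun a => X - C a) by rw [Multiset.map_map]; rfl,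
      roots_multiset_prod_X_sub_C] at this
    simpa using this.symm
  set f := hM.eigenvalues ∘ (Fintype.equivFin V).symm
  have hsorted : univ.val.map (f ∘ Tuple.sort f) = univ.val.map d := by
    rw [← Multiset.map_map, Multiset.map_univ_val_equiv, ← Multiset.map_map,
      Multiset.map_univ_val_equiv, hspec]
  have hkV : k - 1 < Fintype.card V := by
    have := congrArg Multiset.card hsorted
    simp only [Multiset.card_map, card_val, card_univ, Fintype.card_fin] at this
    have := card_le_univ (s := {i | q ≤ d i})
    omega
  rw [kthEig, dif_pos hM, dif_pos hkV]
  exact (Tuple.monotone_sort f).eq_of_card_lt_of_le hkV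
    ((card_filter_eq_of_map_eq hsorted (q < ·)).trans_lt hlt)
    (hle.trans (card_filter_eq_of_map_eq hsorted (q ≤ ·)).ge)

theorem Fintype.exists_equiv_comp_eq_of_card_fiber_eq {α β γ : Type*} [Fintype α] [Fintype β]
    [DecidableEq γ] {f : α → γ} {g : β → γ} (h : ∀ c, #{a | f a = c} = #{b | g b = c}) :
    ∃ e : α ≃ β, ∀ a, g (e a) = f a :=
  ⟨Equiv.ofFiberEquiv fun c => Fintype.equivOfCardEq (by simp only [Fintype.card_subtype, h]),
    Equiv.ofFiberEquiv_map _⟩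

theorem isSymm_signlessLap {V : Type*} [Fintype V] [DecidableEq V] (G : SimpleGraph V)
    [DecidableRel G.Adj] : (signlessLap G).IsSymm :=
  (G.isSymm_degMatrix ℝ).add G.isSymm_adjMatrix

namespace IsCompleteMultipartiteWith

variable {V V' ι : Type*} [Fintype V] [Fintype V'] [DecidableEq ι]
  {G : SimpleGraph V} [DecidableRel G.Adj] {G' : SimpleGraph V'} [DecidableRel G'.Adj]
  {p : V → ι} {p' : V' → ι}

theorem degree_add_card_fiber (hp : IsCompleteMultipartiteWith G p) (v : V) :
    G.degree v + #{u | p u = p v} = Fintype.card V := by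
  rw [← card_neighborFinset_eq_degree, neighborFinset_eq_filter,
    filter_congr fun u _ => (hp v u).trans ne_comm, add_comm, card_filter_add_card_filter_not,
    card_univ]

theorem signlessLap_mulVec_apply [DecidableEq V] (hp : IsCompleteMultipartiteWith G p)
    (x : V → ℝ) (v : V) :
    (signlessLap G *ᵥ x) v = G.degree v * x v + (∑ u, x u - ∑ u with p u = p v, x u) := by
  rw [signlessLap, add_mulVec, Pi.add_apply, degMatrix_mulVec_apply, adjMatrix_mulVec_apply,
    neighborFinset_eq_filter, filter_congr fun u _ => (hp v u).trans ne_comm,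
    ← sum_filter_add_sum_filter_not univ (fun u => p u = p v) x]
  ring

theorem degree_apply_equiv (hp : IsCompleteMultipartiteWith G p)
    (hp' : IsCompleteMultipartiteWith G' p') (e : V' ≃ V) (he : ∀ w, p (e w) = p' w) (w : V') :
    G.degree (e w) = G'.degree w := by
  have h := hp.degree_add_card_fiber (e w)
  rw [Fintype.card_congr e.symm, ← hp'.degree_add_card_fiber w, he] at h
  have : #{u | p u = p' w} = #{w' | p' w' = p' w} :=
    card_equiv e.symm fun u => by simp [← he]
  omega

theorem signlessLap_submatrix [DecidableEq V] [DecidableEq V']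
    (hp : IsCompleteMultipartiteWith G p) (hp' : IsCompleteMultipartiteWith G' p') (e : V' ≃ V) (he : ∀ w, p (e w) = p' w) :
    (signlessLap G).submatrix e e = signlessLap G' := by
  have hadj : ∀ w w', G.Adj (e w) (e w') ↔ G'.Adj w w' := fun w w' => by rw [hp, hp', he, he]
  ext w w'
  simp [signlessLap, degMatrix, diagonal_apply, hp.degree_apply_equiv hp' e he, hadj]

theorem minDegree_eq (hp : IsCompleteMultipartiteWith G p)
    (hp' : IsCompleteMultipartiteWith G' p') (e : V' ≃ V) (he : ∀ w, p (e w) = p' w) :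
    G.minDegree = G'.minDegree := by
  rw [minDegree, minDegree, ← image_univ_equiv e, image_image]
  simp only [Function.comp_def, hp.degree_apply_equiv hp' e he]

end IsCompleteMultipartiteWith

namespace K1tt

variable (r t : ℕ)

-- `inl ()` is the centre and `inr (j, k)` the `k`-th vertex of the `j`-th part of size `t`.
abbrev Vert := Unit ⊕ Fin r × Fin t

def part : Vert r t → Fin (r + 1) := Sum.elim (fun _ => 0) (fun jk => jk.1.succ)

def graph : SimpleGraph (Vert r t) := (⊤ : SimpleGraph (Fin (r + 1))).comap (part r t)

variable {r t}

@[simp] lemma part_inl (u : Unit) : part r t (.inl u) = 0 := rfl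

@[simp] lemma part_inr (jk : Fin r × Fin t) : part r t (.inr jk) = jk.1.succ := rfl

lemma isCompleteMultipartiteWith_graph : IsCompleteMultipartiteWith (graph r t) (part r t) :=
  fun _ _ => by simp [graph]

@[simp] lemma sum_vert {M : Type*} [AddCommMonoid M] (x : Vert r t → M) :
    ∑ w, x w = x (.inl ()) + ∑ j, ∑ k, x (.inr (j, k)) := by
  simp [Fintype.sum_sum_type, Fintype.sum_prod_type]

lemma card_fiber_part (i : Fin (r + 1)) : #{w | part r t w = i} = if i = 0 then 1 else t := by
  rw [card_filter, sum_vert]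
  rcases Fin.eq_zero_or_eq_succ i with rfl | ⟨j, rfl⟩
  · simp [part, Fin.succ_ne_zero]
  · simp [part, (Fin.succ_ne_zero j).symm]

lemma sum_fiber_part_inl (x : Vert r t → ℝ) :
    ∑ w with part r t w = part r t (.inl ()), x w = x (.inl ()) := by
  rw [sum_filter, sum_vert]
  simp [part, Fin.succ_ne_zero]

lemma sum_fiber_part_inr (x : Vert r t → ℝ) (j : Fin r) (k : Fin t) :
    ∑ w with part r t w = part r t (.inr (j, k)), x w = ∑ k', x (.inr (j, k')) := by
  rw [sum_filter, sum_vert]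
  simp [part, (Fin.succ_ne_zero j).symm]

lemma card_vert : Fintype.card (Vert r t) = r * t + 1 := by
  simp [Fintype.card_sum, add_comm]

lemma degree_inl (u : Unit) : (graph r t).degree (.inl u) = r * t := by
  have := isCompleteMultipartiteWith_graph.degree_add_card_fiber (Sum.inl u : Vert r t)
  rwa [card_fiber_part, card_vert, part_inl, if_pos rfl, add_left_inj] at this

lemma degree_inr (jk : Fin r × Fin t) : (graph r t).degree (.inr jk) + t = r * t + 1 := by
  have := isCompleteMultipartiteWith_graph.degree_add_card_fiber (Sum.inr jk : Vert r t)
  rwa [card_fiber_part, card_vert, part_inr, if_neg (Fin.succ_ne_zero _)] at this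

lemma signlessLap_mulVec_inl (x : Vert r t → ℝ) (u : Unit) :
    (signlessLap (graph r t) *ᵥ x) (.inl u) = r * t * x (.inl u) + ∑ j, ∑ k, x (.inr (j, k)) := by
  cases u
  rw [isCompleteMultipartiteWith_graph.signlessLap_mulVec_apply, degree_inl, sum_vert,
    sum_fiber_part_inl]
  push_cast
  ring

lemma signlessLap_mulVec_inr (x : Vert r t → ℝ) (j : Fin r) (k : Fin t) :
    (signlessLap (graph r t) *ᵥ x) (.inr (j, k)) = (r * t + 1 - t) * x (.inr (j, k)) +
      (x (.inl ()) + ∑ j', ∑ k', x (.inr (j', k')) - ∑ k', x (.inr (j, k'))) := by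
  have hdeg : ((graph r t).degree (.inr (j, k)) : ℝ) = r * t + 1 - t := by
    rw [eq_sub_iff_add_eq]
    exact_mod_cast degree_inr (j, k)
  rw [isCompleteMultipartiteWith_graph.signlessLap_mulVec_apply, hdeg, sum_vert,
    sum_fiber_part_inr]

variable (r t)

noncomputable def disc : ℝ := (t : ℝ) ^ 2 * ((r : ℝ) - 2) ^ 2 + 2 * t * (3 * r - 2) + 1

-- The eigenvalues of the quotient matrix `!![r t, r t; 1, 2 r t - 2 t + 1]` of the partition
-- of `K_{1,t,…,t}` into its centre and the rest.
noncomputable def qPlus : ℝ := (3 * (t : ℝ) * r - 2 * t + 1 + Real.sqrt (disc r t)) / 2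

noncomputable def qMinus : ℝ := (3 * (t : ℝ) * r - 2 * t + 1 - Real.sqrt (disc r t)) / 2

noncomputable def quotRoot : Fin 2 → ℝ := ![qPlus r t, qMinus r t]

variable {r t}

lemma one_le_disc (hr : 1 ≤ r) : 1 ≤ disc r t := by
  have : (1 : ℝ) ≤ r := by exact_mod_cast hr
  have h1 : 0 ≤ (t : ℝ) ^ 2 * ((r : ℝ) - 2) ^ 2 := by positivity
  have h2 : 0 ≤ 2 * (t : ℝ) * (3 * r - 2) := mul_nonneg (by positivity) (by linarith)
  unfold disc
  linarith

lemma quotRoot_sq (hr : 1 ≤ r) (i : Fin 2) :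
    quotRoot r t i ^ 2 = (3 * r * t - 2 * t + 1) * quotRoot r t i - 2 * r * t ^ 2 * (r - 1) := by
  have h := Real.sq_sqrt (zero_le_one.trans (one_le_disc (t := t) hr))
  fin_cases i <;>
    simp only [quotRoot, qPlus, qMinus, disc, Fin.zero_eta, Fin.mk_one, Matrix.cons_val_zero,
      Matrix.cons_val_one] at h ⊢ <;>
    linear_combination h / 4

lemma qMinus_lt_qPlus (hr : 1 ≤ r) : qMinus r t < qPlus r t := by
  have := Real.sqrt_pos.mpr (zero_lt_one.trans_le (one_le_disc (t := t) hr))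
  unfold qMinus qPlus
  linarith

lemma lt_qMinus (hr : 2 ≤ r) (htr : 2 + 1 / ((r : ℝ) - 1) < t) :
    r * t + 1 - t < qMinus r t := by
  have hr' : (2 : ℝ) ≤ r := by exact_mod_cast hr
  have hkey : 1 < ((t : ℝ) - 2) * (r - 1) := by
    rw [← lt_sub_iff_add_lt', div_lt_iff₀ (by linarith)] at htr
    linarith
  -- `(r t - 1)² - disc = 4 t ((t - 2)(r - 1) - 1)`
  have hsqrt : Real.sqrt (disc r t) < r * t - 1 := by
    rw [Real.sqrt_lt' (by nlinarith)]
    unfold disc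
    nlinarith
  unfold qMinus
  linarith

variable (r t)

noncomputable def quotVec (ρ : ℝ) : Vert r t → ℝ := Sum.elim (fun _ => r * t) (fun _ => ρ - r * t)

noncomputable def partVec (j₀ : Fin r) (k₀ : ℕ) : Vert r t → ℝ :=
  Sum.elim 0 (fun jk => if jk.1 = j₀ then helmert k₀ jk.2 else 0)

noncomputable def crossVec (j₀ : ℕ) : Vert r t → ℝ := Sum.elim 0 (fun jk => helmert j₀ jk.1)

variable {r t}

lemma mulVec_quotVec {ρ : ℝ} (hρ : ρ ^ 2 = (3 * r * t - 2 * t + 1) * ρ - 2 * r * t ^ 2 * (r - 1)) :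
    signlessLap (graph r t) *ᵥ quotVec r t ρ = ρ • quotVec r t ρ := by
  ext (u | ⟨j, k⟩)
  · simp [signlessLap_mulVec_inl, quotVec]
    ring
  · simp [signlessLap_mulVec_inr, quotVec]
    linear_combination -hρ

lemma mulVec_partVec (j₀ : Fin r) {k₀ : ℕ} (hk₀ : k₀ + 1 < t) :
    signlessLap (graph r t) *ᵥ partVec r t j₀ k₀ = (r * t + 1 - t : ℝ) • partVec r t j₀ k₀ := by
  ext (u | ⟨j, k⟩)
  · simp [signlessLap_mulVec_inl, partVec, sum_helmert hk₀]
  · by_cases hj : j = j₀ <;> simp [signlessLap_mulVec_inr, partVec, sum_helmert hk₀, hj]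

lemma mulVec_crossVec {j₀ : ℕ} (hj₀ : j₀ + 1 < r) :
    signlessLap (graph r t) *ᵥ crossVec r t j₀ = (r * t + 1 - 2 * t : ℝ) • crossVec r t j₀ := by
  ext (u | ⟨j, k⟩)
  · simp [signlessLap_mulVec_inl, crossVec, ← mul_sum, sum_helmert hj₀]
  · simp [signlessLap_mulVec_inr, crossVec, ← mul_sum, sum_helmert hj₀]
    ring

lemma dotProduct_partVec (j₀ j₁ : Fin r) (k₀ k₁ : ℕ) :
    partVec r t j₀ k₀ ⬝ᵥ partVec r t j₁ k₁ =
      if j₀ = j₁ then ∑ k : Fin t, helmert k₀ k * helmert k₁ k else 0 := by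
  rcases eq_or_ne j₀ j₁ with rfl | h
  · simp [dotProduct, partVec, Fintype.sum_prod_type, ite_mul, mul_ite]
  · simp [dotProduct, partVec, Fintype.sum_prod_type, ite_mul, mul_ite, h, h.symm]

lemma dotProduct_crossVec (j₀ j₁ : ℕ) :
    crossVec r t j₀ ⬝ᵥ crossVec r t j₁ = t * ∑ j : Fin r, helmert j₀ j * helmert j₁ j := by
  simp [dotProduct, crossVec, Fintype.sum_sum_type, Fintype.sum_prod_type, mul_sum]

variable (r t)

-- Index set of the eigenbasis: the two quotient eigenvectors, `t - 1` Helmert vectors inside each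
-- of the `r` big parts, and `r - 1` Helmert vectors across them.
abbrev Idx := Fin 2 ⊕ (Fin r × Fin (t - 1) ⊕ Fin (r - 1))

noncomputable def eigvec : Idx r t → Vert r t → ℝ
  | .inl i => quotVec r t (quotRoot r t i)
  | .inr (.inl (j, k)) => partVec r t j k
  | .inr (.inr j) => crossVec r t j

noncomputable def eigval : Idx r t → ℝ
  | .inl i => quotRoot r t i
  | .inr (.inl _) => r * t + 1 - t
  | .inr (.inr _) => r * t + 1 - 2 * t

variable {r t}

lemma card_idx (hr : 1 ≤ r) (ht : 1 ≤ t) : Fintype.card (Idx r t) = Fintype.card (Vert r t) := by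
  obtain ⟨r, rfl⟩ := Nat.exists_eq_add_of_le' hr
  obtain ⟨t, rfl⟩ := Nat.exists_eq_add_of_le' ht
  simp only [Fintype.card_sum, Fintype.card_prod, Fintype.card_fin, Fintype.card_unit,
    Nat.add_sub_cancel]
  ring

lemma mulVec_eigvec (hr : 1 ≤ r) (c : Idx r t) :
    signlessLap (graph r t) *ᵥ eigvec r t c = eigval r t c • eigvec r t c := by
  rcases c with i | ⟨j, k⟩ | j
  · exact mulVec_quotVec (quotRoot_sq hr i)
  · exact mulVec_partVec j (by omega)
  · exact mulVec_crossVec (by omega)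

lemma eigvec_ne_zero (hr : 1 ≤ r) (ht : 1 ≤ t) (c : Idx r t) : eigvec r t c ≠ 0 := by
  have hrt : (r * t : ℝ) ≠ 0 := by positivity
  rcases c with i | ⟨j, k⟩ | j <;> intro h
  · simpa [eigvec, quotVec, hrt] using congrFun h (.inl ())
  · simpa [eigvec, partVec, helmert_self] using congrFun h (.inr (j, ⟨k, by omega⟩))
  · simpa [eigvec, crossVec, helmert_self] using congrFun h (.inr (⟨j, by omega⟩, ⟨0, ht⟩))

lemma pairwise_dotProduct_eigvec (hr : 2 ≤ r) (ht : 1 ≤ t) (htr : 2 + 1 / ((r : ℝ) - 1) < t) :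
    Pairwise fun c c' => eigvec r t c ⬝ᵥ eigvec r t c' = 0 := by
  have key {c c' : Idx r t} (h : eigval r t c ≠ eigval r t c') :
      eigvec r t c ⬝ᵥ eigvec r t c' = 0 :=
    (isSymm_signlessLap _).dotProduct_eq_zero_of_mulVec_eq_smul (mulVec_eigvec (by omega) c)
      (mulVec_eigvec (by omega) c') h
  have hqm := lt_qMinus hr htr
  have hroot (i : Fin 2) : r * t + 1 - t < quotRoot r t i := by
    fin_cases i
    · exact hqm.trans (qMinus_lt_qPlus (by omega))
    · exact hqm
  have hcross : (r * t + 1 - 2 * t : ℝ) < r * t + 1 - t := by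
    have : (1 : ℝ) ≤ t := by exact_mod_cast ht
    linarith
  intro c c' hne
  rcases c with i | ⟨j, k⟩ | j <;> rcases c' with i' | ⟨j', k'⟩ | j'
  · refine key ?_
    have hpm := (qMinus_lt_qPlus (r := r) (t := t) (by omega)).ne
    fin_cases i <;> fin_cases i' <;> simp [eigval, quotRoot, hpm, hpm.symm] at hne ⊢
  · exact key (hroot i).ne'
  · exact key (hcross.trans (hroot i)).ne'
  · exact key (hroot i').ne
  · rw [eigvec, eigvec, dotProduct_partVec]
    split_ifs with hj
    · subst hj
      exact sum_helmert_mul_helmert (fun h => hne (by simp [Fin.ext h])) (by omega) (by omega)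
    · rfl
  · exact key hcross.ne'
  · exact key (hcross.trans (hroot i')).ne
  · exact key hcross.ne
  · rw [eigvec, eigvec, dotProduct_crossVec,
      sum_helmert_mul_helmert (fun h => hne (by simp [Fin.ext h])) (by omega) (by omega), mul_zero]

open Polynomial in
lemma charpoly_signlessLap_graph (hr : 2 ≤ r) (ht : 1 ≤ t) (htr : 2 + 1 / ((r : ℝ) - 1) < t) :
    (signlessLap (graph r t)).charpoly = ∏ c, (X - C (eigval r t c)) :=
  Matrix.charpoly_eq_prod_of_orthogonal_eigenvectors (card_idx (by omega) ht) _ _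
    (mulVec_eigvec (by omega)) (pairwise_dotProduct_eigvec hr ht htr) (eigvec_ne_zero (by omega) ht)

lemma card_qMinus_lt_eigval (hr : 2 ≤ r) (htr : 2 + 1 / ((r : ℝ) - 1) < t) :
    #{c | qMinus r t < eigval r t c} ≤ 1 := by
  have hqm := lt_qMinus hr htr
  have ht : (0 : ℝ) ≤ t := t.cast_nonneg
  have key : ∀ c, qMinus r t < eigval r t c → c = .inl 0 := by
    rintro (i | _ | _) h <;> simp only [eigval] at h
    · fin_cases i
      · rfl
      · simp [quotRoot] at h
    · linarith
    · linarith
  exact card_le_one.mpr fun c hc c' hc' =>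
    (key c (mem_filter.mp hc).2).trans (key c' (mem_filter.mp hc').2).symm

lemma two_le_card_qMinus_le_eigval (hr : 1 ≤ r) : 2 ≤ #{c | qMinus r t ≤ eigval r t c} := by
  have hsub : {.inl 0, .inl 1} ⊆ ({c | qMinus r t ≤ eigval r t c} : Finset (Idx r t)) := by
    intro c hc
    rcases mem_insert.mp hc with rfl | hc
    · exact mem_filter.mpr ⟨mem_univ _, (qMinus_lt_qPlus hr).le⟩
    · rw [mem_singleton.mp hc]
      exact mem_filter.mpr ⟨mem_univ _, le_rfl⟩
  exact (card_le_card hsub).trans' (by simp)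

lemma minDegree_graph (hr : 1 ≤ r) (ht : 1 ≤ t) : (graph r t).minDegree = t * (r - 1) + 1 := by
  have hrt : t * (r - 1) + t = r * t := by
    rw [← Nat.mul_succ, Nat.succ_eq_add_one, Nat.sub_add_cancel hr, mul_comm]
  refine le_antisymm ?_ (le_minDegree_of_forall_le_degree _ _ ?_)
  · have := degree_inr (r := r) (t := t) (⟨0, by omega⟩, ⟨0, by omega⟩)
    have := (graph r t).minDegree_le_degree (.inr (⟨0, by omega⟩, ⟨0, by omega⟩))
    omega
  · rintro (u | jk)
    · rw [degree_inl]
      omega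
    · have := degree_inr jk
      omega

end K1tt

/-- Let `r, t ≥ 2` with `t > 2 + 1/(r-1)` and let `G = K_{1,t,…,t}` be the complete
`(r+1)`-partite graph with one part of size `1` and `r` parts of size `t`. Then
`q₂(G) = (3tr - 2t + 1 - √(t²(r-2)² + 2t(3r-2) + 1)) / 2 > δ(G)`, where
`δ(G) = t(r-1) + 1`. -/
theorem q2_of_K1tt_large_t (r t : ℕ) (hr : 2 ≤ r) (ht : 2 ≤ t)
    (htr : 2 + 1 / ((r : ℝ) - 1) < (t : ℝ))
    (G : SimpleGraph (Fin (r * t + 1))) [DecidableRel G.Adj]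
    (p : Fin (r * t + 1) → Fin (r + 1))
    (hp : IsCompleteMultipartiteWith G p)
    (h0 : {v | p v = 0}.ncard = 1)
    (hi : ∀ i : Fin (r + 1), i ≠ 0 → {v | p v = i}.ncard = t) :
    qEig G 2 = (3 * (t : ℝ) * r - 2 * t + 1 -
        Real.sqrt ((t : ℝ) ^ 2 * ((r : ℝ) - 2) ^ 2 + 2 * t * (3 * r - 2) + 1)) / 2 ∧
    (G.minDegree : ℝ) < qEig G 2 ∧
    G.minDegree = t * (r - 1) + 1 := by
  have hfib (i : Fin (r + 1)) : #{w | K1tt.part r t w = i} = #{v | p v = i} := by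
    rw [K1tt.card_fiber_part, ← Set.toFinset_ofPred, ← Set.ncard_eq_toFinset_card']
    split_ifs with h
    · rw [h, h0]
    · rw [hi i h]
  obtain ⟨e, he⟩ := Fintype.exists_equiv_comp_eq_of_card_fiber_eq hfib
  have hmodel := K1tt.isCompleteMultipartiteWith_graph (r := r) (t := t)
  have hchar : (signlessLap G).charpoly =
      ∏ c, (Polynomial.X - Polynomial.C (K1tt.eigval r t c)) := by
    rw [← K1tt.charpoly_signlessLap_graph hr (by omega) htr, ← hp.signlessLap_submatrix hmodel e he,
      ← charpoly_reindex e.symm]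
    rfl
  have hq2 : qEig G 2 = K1tt.qMinus r t :=
    kthEig_eq_of_charpoly_eq (isHermitian_iff_isSymm.mpr (isSymm_signlessLap G)) _ hchar
      ((K1tt.card_qMinus_lt_eigval hr htr).trans_lt (by norm_num))
      (K1tt.two_le_card_qMinus_le_eigval (by omega))
  have hδ : G.minDegree = t * (r - 1) + 1 := by
    rw [hp.minDegree_eq hmodel e he, K1tt.minDegree_graph (by omega) (by omega)]
  refine ⟨hq2, ?_, hδ⟩
  rw [hq2, hδ]
  push_cast [Nat.cast_sub (by omega : 1 ≤ r)]
  linarith [K1tt.lt_qMinus hr htr]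
end
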